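/- (Theorem 3.1, type 2 tails) Under the linear quantile regression setup with type 2 tails of index ξ > 0, there exists a vector c ∈ ℝ^d with μ_Xᵀc = 1 such that xᵀc > 0 and K(x) = (xᵀc)^{1/ξ} for every x ∈ 𝐗. -/

import Mathlib

open MeasureTheory Filter Topology Real

/-!
For `u > 0` the function `z ↦ F_u (u z)` has quantile `F_u⁻¹(τ) / u`, and by regular variation of
index `-1/ξ` it eventually dominates `F(·|x) ~ K(x) F_u` near `-∞` when `u^(-1/ξ) > K(x)`, and is
dominated by it when `u^(-1/ξ) < K(x)`. Comparing quantiles sandwiches `F⁻¹(τ|x) / F_u⁻¹(τ)` and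
gives the limit `K(x)^ξ` as `τ ↓ 0`. By the linear specification this ratio is
`xᵀγ(τ) / μ_Xᵀγ(τ)`, so the vectors `γ(τ) / μ_Xᵀγ(τ)` have convergent inner products with every
point of the support `𝐗`. Since the second-moment matrix is positive definite, `𝐗` spans `ℝ^d`,
so these vectors converge to some `c`; then `xᵀc = K(x)^ξ` on `𝐗` and `μ_Xᵀc = 1`.
-/

noncomputable def quantile (G : ℝ → ℝ) (t : ℝ) : ℝ := sInf {z | t < G z}

section Quantile

variable {G H H₁ H₂ : ℝ → ℝ} {t u z z₀ z₁ : ℝ}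

lemma bddBelow_setOf_lt_of_tendsto_zero (hH : Tendsto H atBot (𝓝 0)) (ht : 0 < t) :
    BddBelow {z | t < H z} := by
  obtain ⟨z₀, hz₀⟩ := eventually_atBot.mp (hH.eventually_lt_const ht)
  exact ⟨z₀, fun z hz => not_lt.1 fun h => (hz₀ z h.le).not_gt hz⟩

lemma quantile_le (hH : Tendsto H atBot (𝓝 0)) (ht : 0 < t) (hz : t < H z) :
    quantile H t ≤ z :=
  csInf_le (bddBelow_setOf_lt_of_tendsto_zero hH ht) hz

lemma lt_of_quantile_lt (hG : Monotone G) (hG0 : Tendsto G atBot (𝓝 0)) (ht : 0 < t)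
    (hz₁ : t < G z₁) (h : quantile G t < z) : t < G z := by
  obtain ⟨s, hs, hsz⟩ :=
    (csInf_lt_iff (bddBelow_setOf_lt_of_tendsto_zero hG0 ht) ⟨z₁, hz₁⟩).mp h
  exact hs.trans_le (hG hsz.le)

lemma tendsto_quantile_atBot (hG0 : Tendsto G atBot (𝓝 0)) (hGpos : ∀ z, 0 < G z) :
    Tendsto (quantile G) (𝓝[>] 0) atBot := by
  refine tendsto_atBot.2 fun z => ?_
  filter_upwards [Ioo_mem_nhdsGT (hGpos z)] with τ hτ
  exact quantile_le hG0 hτ.1 hτ.2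

open scoped Pointwise in
lemma quantile_comp_mul (hu : 0 < u) :
    quantile (fun z => G (u * z)) t = u⁻¹ * quantile G t := by
  have hset : {z | t < G (u * z)} = u⁻¹ • {z | t < G z} := by
    ext z
    simp [Set.mem_inv_smul_set_iff₀ hu.ne']
  rw [quantile, hset, Real.sInf_smul_of_nonneg (inv_nonneg.2 hu.le), smul_eq_mul, quantile]

lemma quantile_le_quantile_of_le_on_Iic_of_quantile_lt (hle : ∀ z ≤ z₀, H₁ z ≤ H₂ z)
    (hbdd : BddBelow {z | t < H₂ z}) (hH₁ : ∀ z, quantile H₁ t < z → t < H₁ z)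
    (hz₀ : quantile H₁ t < z₀) : quantile H₂ t ≤ quantile H₁ t := by
  refine le_of_forall_gt_imp_ge_of_dense fun z hz => ?_
  have hw : quantile H₁ t < min z z₀ := lt_min hz hz₀
  calc quantile H₂ t ≤ min z z₀ := csInf_le hbdd ((hH₁ _ hw).trans_le (hle _ (min_le_right _ _)))
    _ ≤ z := min_le_left _ _

lemma quantile_le_quantile_of_le_on_Iic_of_quantile_le (hle : ∀ z ≤ z₀, H₁ z ≤ H₂ z)
    (hbdd : BddBelow {z | t < H₂ z}) (hne : {z | t < H₁ z}.Nonempty)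
    (hz₀ : quantile H₂ t ≤ z₀) : quantile H₂ t ≤ quantile H₁ t := by
  refine le_csInf hne fun z hz => ?_
  rcases le_or_gt z z₀ with h | h
  · exact csInf_le hbdd (hz.trans_le (hle z h))
  · exact hz₀.trans h.le

end Quantile

lemma eventually_lt_of_tendsto_div {α : Type*} {l : Filter α} {f g h : α → ℝ} {a b : ℝ}
    (hh : ∀ x, 0 < h x) (hf : Tendsto (fun x => f x / h x) l (𝓝 a))
    (hg : Tendsto (fun x => g x / h x) l (𝓝 b)) (hab : a < b) : ∀ᶠ x in l, f x < g x :=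
  (hf.eventually_lt hg hab).mono fun x hx => (div_lt_div_iff_of_pos_right (hh x)).1 hx

section RegularVariation

variable {G H : ℝ → ℝ} {u v r ξ k : ℝ}

lemma tendsto_atBot_zero_of_tendsto_div (hG : Monotone G) (hGpos : ∀ z, 0 < G z) (hv : 0 < v)
    (hr : r ≠ 1) (hreg : Tendsto (fun z => G (v * z) / G z) atBot (𝓝 r)) :
    Tendsto G atBot (𝓝 0) := by
  have hL := tendsto_atBot_ciInf hG ⟨0, by rintro _ ⟨z, rfl⟩; exact (hGpos z).le⟩
  rcases (le_ciInf fun z => (hGpos z).le : (0 : ℝ) ≤ ⨅ z, G z).eq_or_lt with h | h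
  · rwa [← h] at hL
  · refine absurd (tendsto_nhds_unique hreg ?_) hr
    have h1 := (hL.comp (tendsto_id.const_mul_atBot hv)).div hL h.ne'
    rwa [div_self h.ne'] at h1

lemma eventually_quantile_div_quantile_le (hG0 : Tendsto G atBot (𝓝 0))
    (hGpos : ∀ z, 0 < G z) (hu : 0 < u) (hHG : ∀ᶠ z in atBot, H z ≤ G (u * z))
    (hH : ∃ z, 0 < H z) : ∀ᶠ τ in 𝓝[>] 0, quantile H τ / quantile G τ ≤ u⁻¹ := by
  obtain ⟨z₀, hz₀⟩ := eventually_atBot.mp hHG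
  obtain ⟨z₁, hz₁⟩ := hH
  have hGu0 : Tendsto (fun z => G (u * z)) atBot (𝓝 0) :=
    hG0.comp (tendsto_id.const_mul_atBot hu)
  have hq := tendsto_quantile_atBot hG0 hGpos
  filter_upwards [Ioo_mem_nhdsGT hz₁, hq.eventually_lt_atBot 0, hq.eventually_le_atBot (u * z₀)]
    with τ hτ hq0 hqz₀
  have hcmp := quantile_le_quantile_of_le_on_Iic_of_quantile_le hz₀
    (bddBelow_setOf_lt_of_tendsto_zero hGu0 hτ.1) ⟨z₁, hτ.2⟩
    (by rwa [quantile_comp_mul hu, inv_mul_le_iff₀ hu])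
  rw [quantile_comp_mul hu] at hcmp
  rwa [div_le_iff_of_neg hq0]

lemma eventually_inv_le_quantile_div_quantile (hG : Monotone G) (hG0 : Tendsto G atBot (𝓝 0))
    (hGpos : ∀ z, 0 < G z) (hu : 0 < u) (hGH : ∀ᶠ z in atBot, G (u * z) ≤ H z)
    (hH0 : Tendsto H atBot (𝓝 0)) : ∀ᶠ τ in 𝓝[>] 0, u⁻¹ ≤ quantile H τ / quantile G τ := by
  obtain ⟨z₀, hz₀⟩ := eventually_atBot.mp hGH
  have hq := tendsto_quantile_atBot hG0 hGpos
  filter_upwards [Ioo_mem_nhdsGT (hGpos 0), hq.eventually_lt_atBot 0,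
    hq.eventually_lt_atBot (u * z₀)] with τ hτ hq0 hqz₀
  have hcmp := quantile_le_quantile_of_le_on_Iic_of_quantile_lt hz₀
    (bddBelow_setOf_lt_of_tendsto_zero hH0 hτ.1)
    (fun z hz => lt_of_quantile_lt hG hG0 hτ.1 hτ.2 <| by
      rwa [quantile_comp_mul hu, inv_mul_lt_iff₀ hu] at hz)
    (by rwa [quantile_comp_mul hu, inv_mul_lt_iff₀ hu])
  rw [quantile_comp_mul hu] at hcmp
  rwa [le_div_iff_of_neg hq0]

theorem tendsto_quantile_div_quantile (hG : Monotone G) (hGpos : ∀ z, 0 < G z) (hξ : 0 < ξ)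
    (hreg : ∀ v > (0 : ℝ), Tendsto (fun z => G (v * z) / G z) atBot (𝓝 (v ^ (-1 / ξ))))
    (hk : 0 < k) (hHG : Tendsto (fun z => H z / G z) atBot (𝓝 k)) :
    Tendsto (fun τ => quantile H τ / quantile G τ) (𝓝[>] 0) (𝓝 (k ^ ξ)) := by
  have h2 : (2 : ℝ) ^ (-1 / ξ) < 1 :=
    rpow_lt_one_of_one_lt_of_neg one_lt_two (div_neg_of_neg_of_pos (by norm_num) hξ)
  have hG0 : Tendsto G atBot (𝓝 0) :=
    tendsto_atBot_zero_of_tendsto_div hG hGpos two_pos h2.ne (hreg 2 two_pos)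
  have hH0 : Tendsto H atBot (𝓝 0) := by
    simpa using (hHG.mul hG0).congr fun z => div_mul_cancel₀ _ (hGpos z).ne'
  have hscale : ∀ s > (0 : ℝ), Tendsto (fun z => G (s⁻¹ * z) / G z) atBot (𝓝 (s ^ ξ⁻¹)) := by
    intro s hs
    convert hreg s⁻¹ (inv_pos.2 hs) using 2
    rw [inv_rpow hs.le, ← rpow_neg hs.le, neg_div, neg_neg, one_div]
  have hkξ : 0 < k ^ ξ := rpow_pos_of_pos hk ξ
  refine tendsto_order.2 ⟨fun a ha => ?_, fun b hb => ?_⟩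
  · obtain ⟨s, has, hsk⟩ := exists_between (max_lt ha hkξ)
    have hs : 0 < s := (le_max_right a 0).trans_lt has
    have hGH : ∀ᶠ z in atBot, G (s⁻¹ * z) < H z :=
      eventually_lt_of_tendsto_div hGpos (hscale s hs) hHG
        ((rpow_inv_lt_iff_of_pos hs.le hk.le hξ).2 hsk)
    filter_upwards [eventually_inv_le_quantile_div_quantile hG hG0 hGpos (inv_pos.2 hs)
      (hGH.mono fun z h => h.le) hH0] with τ hτ
    rw [inv_inv] at hτ
    exact ((le_max_left a 0).trans_lt has).trans_le hτ
  · obtain ⟨s, hks, hsb⟩ := exists_between hb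
    have hs : 0 < s := hkξ.trans hks
    have hHG' : ∀ᶠ z in atBot, H z < G (s⁻¹ * z) :=
      eventually_lt_of_tendsto_div hGpos hHG (hscale s hs)
        ((lt_rpow_inv_iff_of_pos hk.le hs.le hξ).2 hks)
    obtain ⟨z₁, hz₁⟩ := (hHG.eventually_const_lt hk).exists
    filter_upwards [eventually_quantile_div_quantile_le hG0 hGpos (inv_pos.2 hs)
      (hHG'.mono fun z h => h.le) ⟨z₁, (div_pos_iff_of_pos_right (hGpos z₁)).1 hz₁⟩] with τ hτ
    rw [inv_inv] at hτ
    exact hτ.trans_lt hsb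

end RegularVariation

section SecondMoment

variable {ι : Type*} [Fintype ι]

lemma star_dotProduct_secondMoment_mulVec {μ : Measure (ι → ℝ)}
    (hint : ∀ i j, Integrable (fun x : ι → ℝ => x i * x j) μ) (v : ι → ℝ) :
    star v ⬝ᵥ (Matrix.of fun i j => ∫ x, x i * x j ∂μ).mulVec v = ∫ x, (x ⬝ᵥ v) ^ 2 ∂μ := by
  have hint' : ∀ i j, Integrable (fun x : ι → ℝ => v i * (x i * x j) * v j) μ :=
    fun i j => ((hint i j).const_mul (v i)).mul_const (v j)
  calc star v ⬝ᵥ (Matrix.of fun i j => ∫ x, x i * x j ∂μ).mulVec v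
      = ∑ i, ∑ j, ∫ x, v i * (x i * x j) * v j ∂μ := by
        simp only [dotProduct, Matrix.mulVec, Matrix.of_apply, star_trivial, Finset.mul_sum,
          integral_mul_const, integral_const_mul]
        exact Finset.sum_congr rfl fun i _ => Finset.sum_congr rfl fun j _ => by ring
    _ = ∫ x, ∑ i, ∑ j, v i * (x i * x j) * v j ∂μ := by
        rw [integral_finsetSum _ fun i _ => integrable_finsetSum _ fun j _ => hint' i j]
        exact Finset.sum_congr rfl fun i _ => (integral_finsetSum _ fun j _ => hint' i j).symm
    _ = ∫ x, (x ⬝ᵥ v) ^ 2 ∂μ := by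
        congr 1 with x
        rw [sq, dotProduct, Finset.sum_mul_sum]
        exact Finset.sum_congr rfl fun i _ => Finset.sum_congr rfl fun j _ => by ring

theorem span_eq_top_of_posDef_secondMoment {μ : Measure (ι → ℝ)} [IsFiniteMeasure μ]
    {S : Set (ι → ℝ)} (hS : IsCompact S) (hμS : μ Sᶜ = 0)
    (hM : (Matrix.of fun i j => ∫ x, x i * x j ∂μ).PosDef) : Submodule.span ℝ S = ⊤ := by
  classical
  by_contra hne
  obtain ⟨f, hf, hker⟩ := (Submodule.span ℝ S).exists_le_ker_of_lt_top (lt_top_iff_ne_top.2 hne)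
  set v := (dotProductEquiv ℝ ι).symm f
  have hfv : ∀ x, f x = x ⬝ᵥ v := fun x => by
    rw [dotProduct_comm, ← dotProductEquiv_apply_apply, LinearEquiv.apply_symm_apply]
  have hv : v ≠ 0 := fun h => hf (by simpa [v] using h)
  have hae : ∀ᵐ x ∂μ, x ∈ S := mem_ae_iff.2 hμS
  have hint : ∀ i j, Integrable (fun x : ι → ℝ => x i * x j) μ := fun i j => by
    have := ((continuous_apply i).mul (continuous_apply j)).continuousOn.integrableOn_compact
      (f := fun x : ι → ℝ => x i * x j) (μ := μ) hS
    rwa [IntegrableOn, Measure.restrict_eq_self_of_ae_mem hae] at this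
  have hzero : ∫ x, (x ⬝ᵥ v) ^ 2 ∂μ = 0 := integral_eq_zero_of_ae <| by
    filter_upwards [hae] with x hx
    rw [← hfv, LinearMap.mem_ker.1 (hker (Submodule.subset_span hx))]
    simp
  have := hM.dotProduct_mulVec_pos hv
  rw [star_dotProduct_secondMoment_mulVec hint, hzero] at this
  exact this.false

end SecondMoment

lemma exists_tendsto_of_span_eq_top {ι α : Type*} [Fintype ι] [DecidableEq ι]
    {S : Set (ι → ℝ)} (hS : Submodule.span ℝ S = ⊤) {l : Filter α} {g : α → ι → ℝ}
    (h : ∀ x ∈ S, ∃ L, Tendsto (fun a => x ⬝ᵥ g a) l (𝓝 L)) : ∃ c, Tendsto g l (𝓝 c) := by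
  have hall : ∀ w, ∃ L, Tendsto (fun a => w ⬝ᵥ g a) l (𝓝 L) := fun w => by
    induction (hS ▸ Submodule.mem_top : w ∈ Submodule.span ℝ S) using Submodule.span_induction with
    | mem x hx => exact h x hx
    | zero => exact ⟨0, by simpa using tendsto_const_nhds⟩
    | add x y _ _ hx hy =>
      obtain ⟨Lx, hx⟩ := hx
      obtain ⟨Ly, hy⟩ := hy
      exact ⟨Lx + Ly, by simpa [add_dotProduct] using hx.add hy⟩
    | smul a x _ hx =>
      obtain ⟨L, hx⟩ := hx
      exact ⟨a * L, by simpa [smul_dotProduct] using hx.const_mul a⟩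
  choose L hL using fun i => hall (Pi.single i 1)
  exact ⟨L, tendsto_pi_nhds.2 fun i => by simpa using hL i⟩

theorem extremal_qr_thm31_type2_general
    (d : ℕ)
    (μ : Measure (Fin d → ℝ)) [IsProbabilityMeasure μ]
    (Xs : Set (Fin d → ℝ))
    (hXssupp : ∀ x, x ∈ Xs ↔ ∀ U ∈ 𝓝 x, 0 < μ U)
    (hXscpt : IsCompact Xs)
    (hposdef : (Matrix.of fun i j : Fin d => ∫ x, x i * x j ∂μ).PosDef)
    (η : ℝ) (hη : η ∈ Set.Ioc (0:ℝ) 1)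
    (γ : ℝ → Fin d → ℝ)
    (F : (Fin d → ℝ) → ℝ → ℝ)
    (hlin : ∀ τ ∈ Set.Ioc (0:ℝ) η, ∀ x ∈ Xs, sInf {z | τ < F x z} = ∑ i, x i * γ τ i)
    (Fu : ℝ → ℝ)
    (hFumono : Monotone Fu)
    (hFuinv : ∀ τ ∈ Set.Ioc (0:ℝ) η, sInf {z | τ < Fu z} = ∑ i, (∫ x, x i ∂μ) * γ τ i)
    (K : (Fin d → ℝ) → ℝ)
    (hKpos : ∀ x ∈ Xs, 0 < K x)
    (ξ : ℝ) (hξ : 0 < ξ)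
    (hFupos : ∀ z : ℝ, 0 < Fu z)
    (hreg : ∀ v > (0:ℝ), Tendsto (fun z => Fu (v * z) / Fu z) atBot (𝓝 (v ^ (-1/ξ))))
    (htaileq : TendstoUniformlyOn (fun z x => F x z / Fu z) K atBot Xs)
    :
    ∃ c : Fin d → ℝ, (∑ i, (∫ x, x i ∂μ) * c i) = 1 ∧
      (∀ x ∈ Xs, 0 < (∑ i, x i * c i) ∧ K x = (∑ i, x i * c i) ^ (1/ξ)) := by
  set m : Fin d → ℝ := fun i => ∫ x, x i ∂μ
  set g : ℝ → Fin d → ℝ := fun τ => (m ⬝ᵥ γ τ)⁻¹ • γ τ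
  have hratio : ∀ (H : ℝ → ℝ) (w : Fin d → ℝ) {k : ℝ}, 0 < k →
      Tendsto (fun z => H z / Fu z) atBot (𝓝 k) → (∀ τ ∈ Set.Ioc 0 η, quantile H τ = w ⬝ᵥ γ τ) →
      Tendsto (fun τ => w ⬝ᵥ g τ) (𝓝[>] 0) (𝓝 (k ^ ξ)) := by
    intro H w k hk hH hq
    refine (tendsto_quantile_div_quantile hFumono hFupos hξ hreg hk hH).congr' ?_
    filter_upwards [Ioc_mem_nhdsGT hη.1] with τ hτ
    rw [hq τ hτ, show quantile Fu τ = m ⬝ᵥ γ τ from hFuinv τ hτ, dotProduct_smul, smul_eq_mul,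
      div_eq_inv_mul]
  have hratioX : ∀ x ∈ Xs, Tendsto (fun τ => x ⬝ᵥ g τ) (𝓝[>] 0) (𝓝 (K x ^ ξ)) := fun x hx =>
    hratio (F x) x (hKpos x hx) (htaileq.tendsto_at hx) fun τ hτ => hlin τ hτ x hx
  have hsupp : Xs = μ.support :=
    Set.ext fun x => (hXssupp x).trans (μ.mem_support_iff_forall x).symm
  obtain ⟨c, hc⟩ := exists_tendsto_of_span_eq_top
    (span_eq_top_of_posDef_secondMoment hXscpt (hsupp ▸ Measure.measure_compl_support) hposdef)
    fun x hx => ⟨_, hratioX x hx⟩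
  have hlim : ∀ w, Tendsto (fun τ => w ⬝ᵥ g τ) (𝓝[>] 0) (𝓝 (w ⬝ᵥ c)) := fun w =>
    ((continuous_const.dotProduct continuous_id).tendsto c).comp hc
  refine ⟨c, ?_, fun x hx => ?_⟩
  · have hFuFu : Tendsto (fun z => Fu z / Fu z) atBot (𝓝 1) :=
      tendsto_const_nhds.congr fun z => (div_self (hFupos z).ne').symm
    have hmc := tendsto_nhds_unique (hlim m) (hratio Fu m one_pos hFuFu hFuinv)
    rwa [one_rpow] at hmc
  · have hxc : x ⬝ᵥ c = K x ^ ξ := tendsto_nhds_unique (hlim x) (hratioX x hx)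
    change 0 < x ⬝ᵥ c ∧ K x = (x ⬝ᵥ c) ^ (1 / ξ)
    rw [hxc, one_div, rpow_rpow_inv (hKpos x hx).le hξ.ne']
    exact ⟨rpow_pos_of_pos (hKpos x hx) ξ, rfl⟩

theorem extremal_qr_thm31_type2
    (d : ℕ) (hd : 1 ≤ d)
    (μ : Measure (Fin d → ℝ)) [IsProbabilityMeasure μ]
    (Xs : Set (Fin d → ℝ))
    (hXssupp : ∀ x, x ∈ Xs ↔ ∀ U ∈ 𝓝 x, 0 < μ U)
    (hXscpt : IsCompact Xs)
    (hposdef : (Matrix.of fun i j : Fin d => ∫ x, x i * x j ∂μ).PosDef)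
    (hmean : ∀ i : Fin d, (∫ x, x i ∂μ) = if (i : ℕ) = 0 then (1:ℝ) else 0)
    (η : ℝ) (hη : η ∈ Set.Ioc (0:ℝ) 1)
    (γ : ℝ → Fin d → ℝ)
    (F : (Fin d → ℝ) → ℝ → ℝ)
    (hFmono : ∀ x ∈ Xs, Monotone (F x))
    (hFrc : ∀ x ∈ Xs, ∀ z : ℝ, ContinuousWithinAt (F x) (Set.Ici z) z)
    (hFrange : ∀ x ∈ Xs, ∀ z : ℝ, F x z ∈ Set.Icc (0:ℝ) 1)
    (hlin : ∀ τ ∈ Set.Ioc (0:ℝ) η, ∀ x ∈ Xs, sInf {z | τ < F x z} = ∑ i, x i * γ τ i)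
    (Fu : ℝ → ℝ)
    (hFumono : Monotone Fu)
    (hFurc : ∀ z : ℝ, ContinuousWithinAt Fu (Set.Ici z) z)
    (hFurange : ∀ z : ℝ, Fu z ∈ Set.Icc (0:ℝ) 1)
    (hFuinv : ∀ τ ∈ Set.Ioc (0:ℝ) η, sInf {z | τ < Fu z} = ∑ i, (∫ x, x i ∂μ) * γ τ i)
    (K : (Fin d → ℝ) → ℝ)
    (hKcont : ContinuousOn K Xs)
    (hKbdd : BddAbove (K '' Xs))
    (hKpos : ∀ x ∈ Xs, 0 < K x)
    (ξ : ℝ) (hξ : 0 < ξ)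
    (hFupos : ∀ z : ℝ, 0 < Fu z)
    (hreg : ∀ v > (0:ℝ), Tendsto (fun z => Fu (v * z) / Fu z) atBot (𝓝 (v ^ (-1/ξ))))
    (htaileq : TendstoUniformlyOn (fun z x => F x z / Fu z) K atBot Xs)
    :
    ∃ c : Fin d → ℝ, (∑ i, (∫ x, x i ∂μ) * c i) = 1 ∧
      (∀ x ∈ Xs, 0 < (∑ i, x i * c i) ∧ K x = (∑ i, x i * c i) ^ (1/ξ)) :=
  extremal_qr_thm31_type2_general d μ Xs hXssupp hXscpt hposdef η hη γ F hlin Fu hFumono hFuinv K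
    hKpos ξ hξ hFupos hreg htaileq
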